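/- For every q ∈ (0,1), every m ∈ ℕ, and all positive reals c_0, c_1, …, c_m: (1/(1−q)^{m+1}) · Σ over all strictly increasing (m+1)-tuples of natural numbers 0 ≤ j_0 < j_1 < … < j_m < ∞ of q^{c_0 j_0 + c_1 j_1 + … + c_m j_m} (1−q^{j_0+1})(1−q^{j_1−j_0})(1−q^{j_2−j_1})⋯(1−q^{j_m−j_{m−1}}) = q^{c_1 + 2c_2 + … + m·c_m} / [ (q^{c_0+c_1+…+c_m};q)_2 (q^{c_1+c_2+…+c_m};q)_2 ⋯ (q^{c_m};q)_2 ], with the series converging absolutely. -/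

import Mathlib

/-!
Writing `j_i = i + k_0 + ⋯ + k_i` identifies strictly increasing tuples with arbitrary gap
tuples `k ∈ ℕ^{m+1}`. In these coordinates `∑ c_i j_i = ∑ i c_i + ∑_t C_t k_t` with
`C_t = c_t + ⋯ + c_m`, and every difference factor becomes `1 - q^{k_t + 1}`, so the summand
splits as `q^{∑ i c_i} ∏_t x_t^{k_t} (1 - q^{k_t+1})` with `x_t = q^{C_t}`. The series thus
factors into `m + 1` one-variable series, each a difference of two geometric series summing to
`(1 - q) / ((1 - x_t)(1 - q x_t)) = (1 - q) / (x_t; q)_2`.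
-/

open scoped BigOperators

/-- The q-Pochhammer symbol `(x;q)_r = ∏_{i=0}^{r−1} (1 − q^i x)` (real version). -/
noncomputable def qPR (q x : ℝ) (r : ℕ) : ℝ := ∏ i ∈ Finset.range r, (1 - q ^ i * x)

/-- The summand of the left-hand side of Statement 14, for a strictly increasing tuple
`j_0 < j_1 < … < j_m`:
`q^{c_0 j_0+…+c_m j_m} (1−q^{j_0+1})(1−q^{j_1−j_0})(1−q^{j_2−j_1})⋯(1−q^{j_m−j_{m−1}})`. -/
noncomputable def lhsTerm14 (q : ℝ) (m : ℕ) (c : ℕ → ℝ) (j : Fin (m + 1) → ℕ) : ℝ :=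
  q ^ (∑ i : Fin (m + 1), c (i : ℕ) * (j i : ℝ)) * (1 - q ^ (j 0 + 1)) *
    ∏ i : Fin m, (1 - q ^ (j i.succ - j i.castSucc))

open Finset

lemma qPR_two (q x : ℝ) : qPR q x 2 = (1 - x) * (1 - q * x) := by
  simp [qPR, prod_range_succ]

lemma qPR_two_pos {q x : ℝ} (hq1 : q ≤ 1) (hx0 : 0 ≤ x) (hx1 : x < 1) :
    0 < qPR q x 2 := by
  rw [qPR_two]
  exact mul_pos (by linarith) (by nlinarith)

lemma hasSum_pow_mul_one_sub_pow {q x : ℝ} (hx : |x| < 1) (hqx : |q * x| < 1) :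
    HasSum (fun k : ℕ => x ^ k * (1 - q ^ (k + 1))) ((1 - q) / qPR q x 2) := by
  have hx' : 1 - x ≠ 0 := by linarith [le_abs_self x]
  have hqx' : 1 - q * x ≠ 0 := by linarith [le_abs_self (q * x)]
  have hterm : ∀ k : ℕ, x ^ k * (1 - q ^ (k + 1)) = x ^ k - q * (q * x) ^ k := fun k => by ring
  have hsum : (1 - q) / qPR q x 2 = (1 - x)⁻¹ - q * (1 - q * x)⁻¹ := by
    rw [qPR_two]
    field_simp
    ring
  simp only [hterm, hsum]
  exact (hasSum_geometric_of_abs_lt_one hx).sub ((hasSum_geometric_of_abs_lt_one hqx).mul_left q)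

lemma summable_norm_prod_and_tsum_prod {R β : Type*} [NormedField R] [CompleteSpace R] :
    ∀ {n : ℕ} (f : Fin n → β → R), (∀ i, Summable fun b => ‖f i b‖) →
      (Summable fun b : Fin n → β => ‖∏ i, f i (b i)‖) ∧
        ∑' b : Fin n → β, ∏ i, f i (b i) = ∏ i, ∑' b, f i b
  | 0, f, _ => ⟨.of_finite, by simp⟩
  | n + 1, f, hf => by
    obtain ⟨hsumm, htsum⟩ :=
      summable_norm_prod_and_tsum_prod (fun i => f i.succ) fun i => hf i.succ
    let e := Fin.consEquiv fun _ : Fin (n + 1) => β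
    have he : ∀ z, ∏ i, f i (e z i) = f 0 z.1 * ∏ i : Fin n, f i.succ (z.2 i) := fun z => by
      simp [e, Fin.consEquiv, Fin.prod_univ_succ]
    refine ⟨?_, ?_⟩
    · rw [← e.summable_iff]
      refine ((hf 0).mul_of_nonneg hsumm (fun _ => norm_nonneg _) fun _ => norm_nonneg _).congr ?_
      intro z
      simp only [Function.comp_apply, he, norm_mul]
    · rw [← e.tsum_eq, Fin.prod_univ_succ, ← htsum, tsum_mul_tsum_of_summable_norm (hf 0) hsumm]
      exact tsum_congr he

namespace Fin

variable {m : ℕ}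

def ofGaps (k : Fin (m + 1) → ℕ) (i : Fin (m + 1)) : ℕ := i + ∑ t ∈ Iic i, k t

lemma Iic_succ (i : Fin m) : Iic i.succ = insert i.succ (Iic i.castSucc) := by
  ext t
  simp only [mem_Iic, mem_insert, le_def, Fin.ext_iff, val_succ, val_castSucc]
  omega

@[simp] lemma ofGaps_zero (k : Fin (m + 1) → ℕ) : ofGaps k 0 = k 0 := by
  rw [ofGaps, show Iic (0 : Fin (m + 1)) = {0} from Iic_bot, sum_singleton, val_zero, zero_add]

lemma ofGaps_succ (k : Fin (m + 1) → ℕ) (i : Fin m) :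
    ofGaps k i.succ = ofGaps k i.castSucc + k i.succ + 1 := by
  have : i.succ ∉ Iic i.castSucc := by simp [le_def]
  simp only [ofGaps, Iic_succ, sum_insert this, val_succ, val_castSucc]
  ring

lemma strictMono_ofGaps (k : Fin (m + 1) → ℕ) : StrictMono (ofGaps k) :=
  strictMono_iff_lt_succ.2 fun i => by rw [ofGaps_succ]; omega

def gaps (j : Fin (m + 1) → ℕ) : Fin (m + 1) → ℕ :=
  cases (j 0) fun i => j i.succ - j i.castSucc - 1

def ofGapsEquiv (m : ℕ) : (Fin (m + 1) → ℕ) ≃ {j : Fin (m + 1) → ℕ // StrictMono j} where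
  toFun k := ⟨ofGaps k, strictMono_ofGaps k⟩
  invFun j := gaps j.1
  left_inv k := by
    funext i
    cases i using Fin.cases with
    | zero => simp [gaps]
    | succ i => simp only [gaps, cases_succ, ofGaps_succ]; omega
  right_inv := by
    rintro ⟨j, hj⟩
    ext i
    induction i using Fin.induction with
    | zero => simp [gaps]
    | succ i ih =>
      change ofGaps (gaps j) _ = j _ at ih ⊢
      have := hj (castSucc_lt_succ (i := i))
      rw [ofGaps_succ, ih]
      simp only [gaps, cases_succ]
      omega

lemma sum_mul_ofGaps {R : Type*} [CommSemiring R] (c : Fin (m + 1) → R) (k : Fin (m + 1) → ℕ) :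
    ∑ i, c i * ofGaps k i =
      ∑ i : Fin (m + 1), ((i : ℕ) : R) * c i + ∑ t, (∑ i ∈ Ici t, c i) * k t := by
  have hswap : ∑ i, ∑ t ∈ Iic i, c i * k t = ∑ t, ∑ i ∈ Ici t, c i * k t :=
    sum_comm' fun i t => by simp
  simp only [ofGaps, Nat.cast_add, Nat.cast_sum, mul_add, mul_sum, sum_add_distrib, hswap,
    ← sum_mul]
  congr 1
  exact sum_congr rfl fun i _ => mul_comm _ _

lemma sum_Ici_eq_sum_Icc {M : Type*} [AddCommMonoid M] (f : ℕ → M) (t : Fin (m + 1)) :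
    ∑ i ∈ Ici t, f i = ∑ u ∈ Icc (t : ℕ) m, f u := by
  rw [← Ico_add_one_right_eq_Icc, ← map_valEmbedding_Ici, sum_map]
  rfl

end Fin

lemma lhsTerm14_ofGaps {q : ℝ} (hq : 0 < q) (m : ℕ) (c : ℕ → ℝ) (k : Fin (m + 1) → ℕ) :
    lhsTerm14 q m c (Fin.ofGaps k) = q ^ (∑ i ∈ range (m + 1), (i : ℝ) * c i) *
      ∏ t : Fin (m + 1), (q ^ ∑ u ∈ Icc (t : ℕ) m, c u) ^ k t * (1 - q ^ (k t + 1)) := by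
  have hexp := Fin.sum_mul_ofGaps (fun i : Fin (m + 1) => c i) k
  simp only [Fin.sum_Ici_eq_sum_Icc c, Fin.sum_univ_eq_sum_range fun i => (i : ℝ) * c i] at hexp
  have hgaps : (1 - q ^ (Fin.ofGaps k 0 + 1)) *
      ∏ i : Fin m, (1 - q ^ (Fin.ofGaps k i.succ - Fin.ofGaps k i.castSucc)) =
      ∏ t, (1 - q ^ (k t + 1)) := by
    rw [Fin.prod_univ_succ, Fin.ofGaps_zero]
    congr 1
    exact prod_congr rfl fun i _ => by rw [Fin.ofGaps_succ]; congr 2; omega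
  rw [lhsTerm14, hexp, mul_assoc, hgaps, Real.rpow_add hq, Real.rpow_sum_of_pos hq _ univ,
    mul_assoc, ← prod_mul_distrib]
  congr 2 with t
  rw [Real.rpow_mul hq.le, Real.rpow_natCast]

/-- For `q ∈ (0,1)`, `m ∈ ℕ`, positive reals `c_0, …, c_m`:
`(1/(1−q)^{m+1}) Σ_{0 ≤ j_0 < j_1 < … < j_m}
   q^{c_0 j_0+…+c_m j_m} (1−q^{j_0+1})(1−q^{j_1−j_0})⋯(1−q^{j_m−j_{m−1}})
 = q^{c_1+2c_2+…+m c_m} / [(q^{c_0+…+c_m};q)_2 (q^{c_1+…+c_m};q)_2 ⋯ (q^{c_m};q)_2]`,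
with the series converging absolutely. -/
theorem statement14 (q : ℝ) (hq : q ∈ Set.Ioo (0 : ℝ) 1) (m : ℕ)
    (c : ℕ → ℝ) (hc : ∀ i, i ≤ m → 0 < c i) :
    Summable (fun j : {j : Fin (m + 1) → ℕ // StrictMono j} => lhsTerm14 q m c j.1) ∧
    (1 / (1 - q) ^ (m + 1)) *
        ∑' j : {j : Fin (m + 1) → ℕ // StrictMono j}, lhsTerm14 q m c j.1
      = q ^ (∑ i ∈ Finset.range (m + 1), (i : ℝ) * c i) /
          ∏ i ∈ Finset.Icc 0 m, qPR q (q ^ (∑ t ∈ Finset.Icc i m, c t)) 2 := by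
  obtain ⟨hq0, hq1⟩ := hq
  set x : ℕ → ℝ := fun i => q ^ ∑ t ∈ Icc i m, c t
  have hx : ∀ i ≤ m, 0 < x i ∧ x i < 1 := fun i hi =>
    ⟨Real.rpow_pos_of_pos hq0 _, Real.rpow_lt_one hq0.le hq1 <|
      sum_pos (fun t ht => hc t (mem_Icc.1 ht).2) ⟨m, mem_Icc.2 ⟨hi, le_rfl⟩⟩⟩
  have hfactor : ∀ t : Fin (m + 1), HasSum (fun k : ℕ => x t ^ k * (1 - q ^ (k + 1)))
      ((1 - q) / qPR q (x t) 2) := fun t => by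
    obtain ⟨hx0, hx1⟩ := hx t (Nat.lt_succ_iff.1 t.2)
    refine hasSum_pow_mul_one_sub_pow ?_ ?_ <;> rw [abs_lt] <;> constructor <;> nlinarith
  obtain ⟨hsumm, htsum⟩ := summable_norm_prod_and_tsum_prod (R := ℝ) (β := ℕ)
    (fun t k => x t ^ k * (1 - q ^ (k + 1))) fun t => summable_norm_iff.2 (hfactor t).summable
  have hterm : ∀ k, lhsTerm14 q m c (Fin.ofGapsEquiv m k).1 = q ^ (∑ i ∈ range (m + 1),
      (i : ℝ) * c i) * ∏ t : Fin (m + 1), x t ^ k t * (1 - q ^ (k t + 1)) :=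
    lhsTerm14_ofGaps hq0 m c
  refine ⟨?_, ?_⟩
  · rw [← (Fin.ofGapsEquiv m).summable_iff]
    exact (summable_norm_iff.1 hsumm).mul_left _ |>.congr fun k => (hterm k).symm
  · have hP : ∀ i ∈ Icc 0 m, 0 < qPR q (x i) 2 := fun i hi =>
      qPR_two_pos hq1.le (hx i (mem_Icc.1 hi).2).1.le (hx i (mem_Icc.1 hi).2).2
    have hq1' : 1 - q ≠ 0 := by linarith
    change _ = _ / ∏ i ∈ Icc 0 m, qPR q (x i) 2
    rw [← (Fin.ofGapsEquiv m).tsum_eq, tsum_congr hterm, tsum_mul_left, htsum,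
      prod_congr rfl fun t _ => (hfactor t).tsum_eq, prod_div_distrib, prod_const, card_univ,
      Fintype.card_fin, Fin.prod_univ_eq_prod_range (fun i => qPR q (x i) 2),
      Nat.range_succ_eq_Icc_zero]
    field_simp [(prod_pos hP).ne']
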